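/- Let H be a d×d Hermitian complex matrix and β > 0, with Gibbs state ρ_β := exp(−βH)/Tr(exp(−βH)). Let L be a linear map on d×d complex matrices satisfying Tr(L(X)) = 0 for every matrix X, and suppose its Hilbert–Schmidt adjoint L† is self-adjoint with respect to the KMS inner product, i.e. ⟨A, L†(B)⟩_{ρ_β} = ⟨L†(A), B⟩_{ρ_β} for all matrices A, B. Then L(ρ_β) = 0. -/

import Mathlib

open Matrix MeasureTheory Filter
open scoped ComplexOrder

noncomputable section

/-- The space of `d × d` complex matrices. -/
abbrev Mat (d : ℕ) : Type := Matrix (Fin d) (Fin d) ℂ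

/-- The Gibbs state `ρ_β = exp(-βH)/Tr(exp(-βH))`. -/
def gibbs {d : ℕ} (H : Mat d) (β : ℝ) : Mat d :=
  (Matrix.trace (NormedSpace.exp ((-β : ℂ) • H)))⁻¹ • NormedSpace.exp ((-β : ℂ) • H)

/-- The power `ρ_β^s = exp(-sβH)/Tr(exp(-βH))^s`. -/
def gibbsPow {d : ℕ} (H : Mat d) (β s : ℝ) : Mat d :=
  ((Matrix.trace (NormedSpace.exp ((-β : ℂ) • H))) ^ (s : ℂ))⁻¹ •
    NormedSpace.exp ((-(s * β) : ℂ) • H)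

/-- The Hilbert–Schmidt inner product `⟨A,B⟩₂ = Tr(A† B)`. -/
def hsInner {d : ℕ} (A B : Mat d) : ℂ := Matrix.trace (Aᴴ * B)

/-- The KMS inner product `⟨A,B⟩_{ρ_β} = Tr(A† ρ_β^{1/2} B ρ_β^{1/2})`. -/
def kmsInner {d : ℕ} (H : Mat d) (β : ℝ) (A B : Mat d) : ℂ :=
  Matrix.trace (Aᴴ * gibbsPow H β (1/2) * B * gibbsPow H β (1/2))

/-- The former `Matrix.PosSemidef.sqrt` (removed from Mathlib), with its old definition. -/
def psdSqrt {d : ℕ} {A : Mat d} (hA : A.PosSemidef) : Mat d :=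
  hA.1.eigenvectorUnitary.1 * diagonal ((↑) ∘ (√·) ∘ hA.1.eigenvalues) *
    (star hA.1.eigenvectorUnitary : Mat d)

/-- The trace norm `‖A‖₁ = Tr √(A†A)`. -/
def traceNorm {d : ℕ} (A : Mat d) : ℝ :=
  ((psdSqrt (Matrix.posSemidef_conjTranspose_mul_self A)).trace).re

/-- The operator (spectral) norm of a matrix. -/
def opNorm {d : ℕ} (A : Mat d) : ℝ :=
  ‖Matrix.toEuclideanCLM (𝕜 := ℂ) A‖

/-- The Frobenius / Hilbert–Schmidt norm `‖A‖₂ = √Tr(A†A)`. -/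
def frobNorm {d : ℕ} (A : Mat d) : ℝ :=
  Real.sqrt ((Matrix.trace (Aᴴ * A)).re)

attribute [local instance] Matrix.frobeniusNormedAddCommGroup Matrix.frobeniusNormedSpace

/-- The exponential of a linear endomorphism of matrix space. -/
def endExp {d : ℕ} (L : Mat d →ₗ[ℂ] Mat d) : Mat d →ₗ[ℂ] Mat d :=
  (@NormedSpace.exp _ _ _ (by exact (@NonUnitalSeminormedRing.toIsTopologicalRing _
    (@NonUnitalNormedRing.toNonUnitalSeminormedRing _ (@NormedRing.toNonUnitalNormedRing _
      (@ContinuousLinearMap.toNormedRing ℂ (Mat d) _ _ _)))))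
    (LinearMap.toContinuousLinearMap L)).toLinearMap

/-- The induced trace norm (1→1 norm) of a linear map on matrices. -/
def oneNorm {d : ℕ} (L : Mat d →ₗ[ℂ] Mat d) : ℝ :=
  ⨆ A : {A : Mat d // traceNorm A = 1}, traceNorm (L A.1)

/-!
The identity is the trace functional in Hilbert–Schmidt form, `Tr X = ⟨1, X⟩₂`, so `Tr ∘ L = 0`
says exactly `L† 1 = 0`. Since `ρ_β = ρ_β^{1/2} ρ_β^{1/2}` is Hermitian, pairing with `ρ_β` is
the KMS pairing with the identity: `⟨ρ_β, X⟩₂ = ⟨1, X⟩_{ρ_β}`. Hence, for every `B`,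
`⟨L ρ_β, B⟩₂ = ⟨1, L† B⟩_{ρ_β} = ⟨L† 1, B⟩_{ρ_β} = 0`, and nondegeneracy of `⟨·,·⟩₂` gives
`L ρ_β = 0`.
-/

section

variable {d : ℕ}

theorem hsInner_self_eq_zero_iff {A : Mat d} : hsInner A A = 0 ↔ A = 0 :=
  trace_conjTranspose_mul_self_eq_zero_iff

theorem map_one_eq_zero_of_trace_comp_eq_zero {L Ladj : Mat d →ₗ[ℂ] Mat d}
    (hTr : ∀ X, trace (L X) = 0) (hadj : ∀ A B, hsInner (L A) B = hsInner A (Ladj B)) :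
    Ladj 1 = 0 := by
  have h : ∀ A, hsInner A (Ladj 1) = 0 := fun A => by
    rw [← hadj, hsInner, Matrix.mul_one, trace_conjTranspose, hTr, star_zero]
  exact hsInner_self_eq_zero_iff.mp (h _)

theorem gibbsPow_half_mul_self (H : Mat d) (β : ℝ) :
    gibbsPow H β (1/2) * gibbsPow H β (1/2) = gibbs H β := by
  rw [gibbsPow, gibbs, smul_mul_smul_comm, ← mul_inv, ← sq,
    ← Matrix.exp_add_of_commute _ _ (Commute.refl _), ← add_smul]
  congr 3
  · push_cast
    rw [one_div]
    exact Complex.cpow_ofNat_inv_pow _ 2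
  · push_cast
    ring

theorem gibbs_isHermitian {H : Mat d} (hH : H.IsHermitian) (β : ℝ) :
    (gibbs H β).IsHermitian := by
  have hexp : (NormedSpace.exp ((-β : ℂ) • H)).IsHermitian :=
    (hH.smul (by simp [IsSelfAdjoint])).exp
  have htrace : IsSelfAdjoint (trace (NormedSpace.exp ((-β : ℂ) • H))) := by
    rw [IsSelfAdjoint, ← trace_conjTranspose, hexp.eq]
  exact hexp.smul htrace.inv₀

theorem kmsInner_one_left (H : Mat d) (β : ℝ) (X : Mat d) :
    kmsInner H β 1 X = trace (X * gibbs H β) := by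
  rw [kmsInner, conjTranspose_one, Matrix.one_mul, trace_mul_cycle, gibbsPow_half_mul_self,
    trace_mul_comm]

theorem kmsInner_zero_left (H : Mat d) (β : ℝ) (X : Mat d) : kmsInner H β 0 X = 0 := by
  simp [kmsInner]

end

theorem stmt_1_general {d : ℕ} (H : Mat d) (hH : H.IsHermitian) (β : ℝ)
    (L Ladj : Mat d →ₗ[ℂ] Mat d)
    (hTr : ∀ X : Mat d, Matrix.trace (L X) = 0)
    (hadj : ∀ A B : Mat d, hsInner (L A) B = hsInner A (Ladj B))
    (hKMS : ∀ A B : Mat d, kmsInner H β A (Ladj B) = kmsInner H β (Ladj A) B) :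
    L (gibbs H β) = 0 := by
  have hLadj_one := map_one_eq_zero_of_trace_comp_eq_zero hTr hadj
  have horth : ∀ B, hsInner (L (gibbs H β)) B = 0 := fun B =>
    calc hsInner (L (gibbs H β)) B
        = hsInner (gibbs H β) (Ladj B) := hadj _ _
      _ = kmsInner H β 1 (Ladj B) := by
          rw [kmsInner_one_left, hsInner, (gibbs_isHermitian hH β).eq, trace_mul_comm]
      _ = kmsInner H β (Ladj 1) B := hKMS 1 B
      _ = 0 := by rw [hLadj_one, kmsInner_zero_left]
  exact hsInner_self_eq_zero_iff.mp (horth _)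

/-- A trace-annihilating generator whose Hilbert–Schmidt adjoint is self-adjoint
with respect to the KMS inner product annihilates the Gibbs state. -/
theorem stmt_1 {d : ℕ} (hd : 1 ≤ d) (H : Mat d) (hH : H.IsHermitian) (β : ℝ) (hβ : 0 < β)
    (L Ladj : Mat d →ₗ[ℂ] Mat d)
    (hTr : ∀ X : Mat d, Matrix.trace (L X) = 0)
    (hadj : ∀ A B : Mat d, hsInner (L A) B = hsInner A (Ladj B))
    (hKMS : ∀ A B : Mat d, kmsInner H β A (Ladj B) = kmsInner H β (Ladj A) B) :
    L (gibbs H β) = 0 :=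
  stmt_1_general H hH β L Ladj hTr hadj hKMS

end
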